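/- arXiv:2210.13831 — 3 statements merged into one kernel-verified Lean document; each statement's English description precedes it below -/
import Mathlib

section
/- Let ρ > 0, γ > 2ρ, and let N be a positive integer with N ≥ ρ²/(γ(γ − 2ρ)). Set α = 1/√(Nγ(γ − 2ρ)), c = −αρ, s = √(1 − c²), and define F : ℝ² → ℝ² by F(x) = α·A·x, where A is the 2×2 rotation matrix with first row (c, −s) and second row (s, c). Then: (i) F is ρ-negatively comonotone; and (ii) every Proximal Point trajectory (x^k) with stepsize γ for F satisfies ‖F(x^{N+1})‖² ≥ ‖x⁰‖² / (γ(γ − 2ρ)·N·(1 + 1/N)^{N+1}) (the solution is x* = 0). -/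
open RealInnerProductSpace

/-! The operator is `α` times a rotation whose angle is chosen so that `⟪F u, u⟫ = -ρ ‖F u‖²`
holds with equality for every `u`; it is linear, so it is `ρ`-negatively comonotone. Along a
Proximal Point trajectory `x^k = x^{k+1} + γ F(x^{k+1})`, hence this equality and
`‖F u‖ = α ‖u‖` give `‖x^k‖² = (1 + γ(γ - 2ρ)α²) ‖x^{k+1}‖² = (1 + 1/N) ‖x^{k+1}‖²`, so the
norm of `x^k` decays exactly geometrically and the bound holds with equality. -/

def IsNegComonotone {E : Type*} [NormedAddCommGroup E] [InnerProductSpace ℝ E]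
    (ρ : ℝ) (F : E → E) : Prop :=
  ∀ x y, ⟪F x - F y, x - y⟫ ≥ -ρ * ‖F x - F y‖ ^ 2

def IsProximalPointTrajectory {E : Type*} [NormedAddCommGroup E] [InnerProductSpace ℝ E]
    (F : E → E) (γ : ℝ) (x : ℕ → E) : Prop :=
  ∀ k, x (k + 1) = x k - γ • F (x (k + 1))

section InnerProductSpace

variable {E : Type*} [NormedAddCommGroup E] [InnerProductSpace ℝ E]
  {F : E → E} {ρ γ α : ℝ}

theorem isNegComonotone_of_map_sub (hsub : ∀ x y, F x - F y = F (x - y))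
    (hinner : ∀ u, ⟪F u, u⟫ = -ρ * ‖F u‖ ^ 2) : IsNegComonotone ρ F := fun x y => by
  rw [hsub]
  exact (hinner (x - y)).ge

theorem norm_sq_eq_of_proximal_step (hnorm : ∀ u, ‖F u‖ ^ 2 = α ^ 2 * ‖u‖ ^ 2)
    (hinner : ∀ u, ⟪F u, u⟫ = -ρ * ‖F u‖ ^ 2) {x y : E} (hstep : y = x - γ • F y) :
    ‖x‖ ^ 2 = (1 + γ * (γ - 2 * ρ) * α ^ 2) * ‖y‖ ^ 2 := by
  rw [sub_eq_iff_eq_add.mp hstep.symm, norm_add_sq_real, norm_smul, mul_pow,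
    Real.norm_eq_abs, sq_abs, real_inner_smul_right, real_inner_comm, hinner, hnorm]
  ring

theorem IsProximalPointTrajectory.norm_sq_eq_pow_mul {x : ℕ → E}
    (hx : IsProximalPointTrajectory F γ x) (hnorm : ∀ u, ‖F u‖ ^ 2 = α ^ 2 * ‖u‖ ^ 2)
    (hinner : ∀ u, ⟪F u, u⟫ = -ρ * ‖F u‖ ^ 2) (m : ℕ) :
    ‖x 0‖ ^ 2 = (1 + γ * (γ - 2 * ρ) * α ^ 2) ^ m * ‖x m‖ ^ 2 := by
  induction m with
  | zero => simp
  | succ m ih => rw [ih, norm_sq_eq_of_proximal_step hnorm hinner (hx m), pow_succ]; ring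

end InnerProductSpace

section ScaledRotation

variable {F : EuclideanSpace ℝ (Fin 2) → EuclideanSpace ℝ (Fin 2)} {α c s : ℝ}

def IsScaledRotation (α c s : ℝ) (F : EuclideanSpace ℝ (Fin 2) → EuclideanSpace ℝ (Fin 2)) :
    Prop :=
  ∀ x, F x 0 = α * (c * x 0 - s * x 1) ∧ F x 1 = α * (s * x 0 + c * x 1)

theorem EuclideanSpace.real_norm_sq_fin_two (u : EuclideanSpace ℝ (Fin 2)) :
    ‖u‖ ^ 2 = u 0 ^ 2 + u 1 ^ 2 := by
  simp [EuclideanSpace.real_norm_sq_eq, Fin.sum_univ_two]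

theorem EuclideanSpace.real_inner_fin_two (u v : EuclideanSpace ℝ (Fin 2)) :
    ⟪u, v⟫ = u 0 * v 0 + u 1 * v 1 := by
  simp [PiLp.inner_apply, Fin.sum_univ_two, mul_comm]

theorem IsScaledRotation.map_sub (hF : IsScaledRotation α c s F)
    (x y : EuclideanSpace ℝ (Fin 2)) : F x - F y = F (x - y) := by
  ext i
  fin_cases i <;> simp only [Fin.zero_eta, Fin.mk_one, PiLp.sub_apply, (hF _).1, (hF _).2] <;> ring

theorem IsScaledRotation.norm_sq (hF : IsScaledRotation α c s F)
    (hcs : c ^ 2 + s ^ 2 = 1) (u : EuclideanSpace ℝ (Fin 2)) :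
    ‖F u‖ ^ 2 = α ^ 2 * ‖u‖ ^ 2 := by
  rw [EuclideanSpace.real_norm_sq_fin_two, EuclideanSpace.real_norm_sq_fin_two, (hF u).1,
    (hF u).2]
  linear_combination α ^ 2 * (u 0 ^ 2 + u 1 ^ 2) * hcs

theorem IsScaledRotation.inner_self (hF : IsScaledRotation α c s F)
    (u : EuclideanSpace ℝ (Fin 2)) : ⟪F u, u⟫ = α * c * ‖u‖ ^ 2 := by
  rw [EuclideanSpace.real_inner_fin_two, EuclideanSpace.real_norm_sq_fin_two, (hF u).1,
    (hF u).2]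
  ring

end ScaledRotation

/-- Worst-case example for the Proximal Point method: the scaled rotation operator
`F(x) = α A x` (with `A` the rotation by angle `θ`, `cos θ = c = −αρ`,
`α = 1/√(Nγ(γ−2ρ))`) is `ρ`-negatively comonotone and every PP trajectory with
stepsize `γ` satisfies
`‖F(x^{N+1})‖² ≥ ‖x⁰‖² / (γ(γ−2ρ)N(1 + 1/N)^{N+1})` (the solution is `x* = 0`). -/
theorem stmt_6 (ρ γ : ℝ) (hρ : 0 < ρ) (hγ : γ > 2 * ρ)
    (N : ℕ) (hN1 : 1 ≤ N) (hN : (N : ℝ) ≥ ρ ^ 2 / (γ * (γ - 2 * ρ)))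
    (α c s : ℝ)
    (hα : α = 1 / Real.sqrt (N * γ * (γ - 2 * ρ)))
    (hc : c = -(α * ρ)) (hs : s = Real.sqrt (1 - c ^ 2))
    (F : EuclideanSpace ℝ (Fin 2) → EuclideanSpace ℝ (Fin 2))
    (hF : ∀ x : EuclideanSpace ℝ (Fin 2),
      F x 0 = α * (c * x 0 - s * x 1) ∧ F x 1 = α * (s * x 0 + c * x 1)) :
    (∀ x y, ⟪F x - F y, x - y⟫ ≥ -ρ * ‖F x - F y‖ ^ 2) ∧
    (∀ x : ℕ → EuclideanSpace ℝ (Fin 2),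
      (∀ k : ℕ, x (k + 1) = x k - γ • F (x (k + 1))) →
      ‖F (x (N + 1))‖ ^ 2 ≥
        ‖x 0‖ ^ 2 / (γ * (γ - 2 * ρ) * N * (1 + 1 / (N : ℝ)) ^ (N + 1))) := by
  have hγρ : 0 < γ * (γ - 2 * ρ) := mul_pos (by linarith) (by linarith)
  have hNpos : (0 : ℝ) < N := by exact_mod_cast hN1
  have hD : 0 < N * (γ * (γ - 2 * ρ)) := mul_pos hNpos hγρ
  have hα2 : α ^ 2 * (N * (γ * (γ - 2 * ρ))) = 1 := by
    rw [hα, div_pow, one_pow, mul_assoc, Real.sq_sqrt hD.le]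
    exact div_mul_cancel₀ _ hD.ne'
  have hc2 : c ^ 2 ≤ 1 := by
    rw [hc, neg_sq, mul_pow, ← hα2]
    gcongr
    exact (div_le_iff₀ hγρ).mp hN
  have hcs : c ^ 2 + s ^ 2 = 1 := by rw [hs, Real.sq_sqrt (by linarith)]; ring
  have hnorm := IsScaledRotation.norm_sq hF hcs
  have hinner (u) : ⟪F u, u⟫ = -ρ * ‖F u‖ ^ 2 := by
    rw [IsScaledRotation.inner_self hF, hnorm, hc]; ring
  refine ⟨isNegComonotone_of_map_sub (IsScaledRotation.map_sub hF) hinner, fun x hx => ?_⟩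
  have hratio : 1 + γ * (γ - 2 * ρ) * α ^ 2 = 1 + 1 / (N : ℝ) := by
    field_simp; linear_combination hα2
  have hdecay := IsProximalPointTrajectory.norm_sq_eq_pow_mul hx hnorm hinner (N + 1)
  rw [hratio] at hdecay
  refine ge_of_eq ?_
  rw [hnorm, hdecay, eq_div_iff (by positivity)]
  linear_combination ‖x (N + 1)‖ ^ 2 * (1 + 1 / (N : ℝ)) ^ (N + 1) * hα2
end

section
/- Let ρ ≥ 0, L > 0, let F : ℝ^d → ℝ^d be L-Lipschitz and ρ-star-negatively comonotone with respect to x* with F(x*) = 0. If 2ρ < γ₁ ≤ 1/L and 0 < γ₂ < γ₁ − 2ρ, then the Extragradient iterates with stepsizes γ₁, γ₂ satisfy, for every N ≥ 0: (1/(N+1)) ∑_{k=0}^{N} ‖F(x̃^k)‖² ≤ ‖x⁰ − x*‖² / (γ₂(γ₁ − 2ρ − γ₂)(N+1)). -/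
/-!
Extragradient with the lookahead stepsize `γ₁ ≤ 1/L` keeps `F(x̃)` within `‖F x‖` of `F x`,
which gives `‖F x̃‖² ≤ 2⟪F x̃, F x⟫`. Combined with star-negative comonotonicity at `x̃`
this makes `⟪F x̃, x - x*⟫ ≥ (γ₁/2 - ρ)‖F x̃‖²`, so each step decreases `‖x - x*‖²` by at least
`γ₂(γ₁ - 2ρ - γ₂)‖F x̃‖²`; telescoping bounds the sum of these decreases by `‖x⁰ - x*‖²`.
-/

open RealInnerProductSpace Finset

section Extragradient

variable {E : Type*} [NormedAddCommGroup E] [InnerProductSpace ℝ E]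

lemma norm_sq_le_two_inner_of_norm_sub_le {u v : E} (h : ‖v - u‖ ≤ ‖u‖) :
    ‖v‖ ^ 2 ≤ 2 * ⟪v, u⟫ := by
  have hsub := norm_sub_sq_real v u
  nlinarith [norm_nonneg u, norm_nonneg (v - u)]

variable {F : E → E} {L ρ γ₁ γ₂ : ℝ} {xs : E}

lemma norm_extrapolated_sub_le (hLip : ∀ x y, ‖F x - F y‖ ≤ L * ‖x - y‖)
    (hγ₁ : 0 ≤ γ₁) (hγ₁L : γ₁ * L ≤ 1) (x : E) :
    ‖F (x - γ₁ • F x) - F x‖ ≤ ‖F x‖ :=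
  calc ‖F (x - γ₁ • F x) - F x‖ ≤ L * ‖x - γ₁ • F x - x‖ := hLip _ _
    _ = γ₁ * L * ‖F x‖ := by
      rw [sub_sub_cancel_left, norm_neg, norm_smul, Real.norm_of_nonneg hγ₁]; ring
    _ ≤ ‖F x‖ := mul_le_of_le_one_left (norm_nonneg _) hγ₁L

lemma inner_extrapolated_ge (hLip : ∀ x y, ‖F x - F y‖ ≤ L * ‖x - y‖)
    (hstar : ∀ x, -ρ * ‖F x‖ ^ 2 ≤ ⟪F x, x - xs⟫)
    (hγ₁ : 0 ≤ γ₁) (hγ₁L : γ₁ * L ≤ 1) (x : E) :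
    (γ₁ / 2 - ρ) * ‖F (x - γ₁ • F x)‖ ^ 2 ≤ ⟪F (x - γ₁ • F x), x - xs⟫ := by
  set v := F (x - γ₁ • F x)
  have hvu : ‖v‖ ^ 2 ≤ 2 * ⟪v, F x⟫ :=
    norm_sq_le_two_inner_of_norm_sub_le (norm_extrapolated_sub_le hLip hγ₁ hγ₁L x)
  have hsplit : ⟪v, x - xs⟫ = ⟪v, x - γ₁ • F x - xs⟫ + γ₁ * ⟪v, F x⟫ := by
    rw [← real_inner_smul_right, ← inner_add_right, sub_right_comm, sub_add_cancel]
  nlinarith [hstar (x - γ₁ • F x)]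

lemma norm_extragradient_step_sub_sq_le (hLip : ∀ x y, ‖F x - F y‖ ≤ L * ‖x - y‖)
    (hstar : ∀ x, -ρ * ‖F x‖ ^ 2 ≤ ⟪F x, x - xs⟫)
    (hγ₁ : 0 ≤ γ₁) (hγ₁L : γ₁ * L ≤ 1) (hγ₂ : 0 ≤ γ₂) (x : E) :
    γ₂ * (γ₁ - 2 * ρ - γ₂) * ‖F (x - γ₁ • F x)‖ ^ 2 ≤
      ‖x - xs‖ ^ 2 - ‖x - γ₂ • F (x - γ₁ • F x) - xs‖ ^ 2 := by
  set v := F (x - γ₁ • F x)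
  have hexpand : ‖x - γ₂ • v - xs‖ ^ 2 = ‖x - xs‖ ^ 2 - 2 * γ₂ * ⟪v, x - xs⟫ + γ₂ ^ 2 * ‖v‖ ^ 2 := by
    rw [sub_right_comm, norm_sub_sq_real, real_inner_smul_right, norm_smul,
      Real.norm_of_nonneg hγ₂, real_inner_comm]
    ring
  rw [hexpand]
  nlinarith [mul_le_mul_of_nonneg_left (inner_extrapolated_ge hLip hstar hγ₁ hγ₁L x) hγ₂]

end Extragradient

lemma sum_range_le_of_le_sub_succ {a b : ℕ → ℝ} (h : ∀ k, a k ≤ b k - b (k + 1)) (n : ℕ)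
    (hb : 0 ≤ b n) : ∑ k ∈ range n, a k ≤ b 0 :=
  calc ∑ k ∈ range n, a k ≤ ∑ k ∈ range n, (b k - b (k + 1)) := sum_le_sum fun k _ => h k
    _ = b 0 - b n := sum_range_sub' b n
    _ ≤ b 0 := sub_le_self _ hb

theorem stmt_10_general {d : ℕ} (ρ L : ℝ) (hρ : 0 ≤ ρ) (hL : 0 < L)
    (F : EuclideanSpace ℝ (Fin d) → EuclideanSpace ℝ (Fin d))
    (hLip : ∀ x y, ‖F x - F y‖ ≤ L * ‖x - y‖)
    (xs : EuclideanSpace ℝ (Fin d))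
    (hstar : ∀ x, ⟪F x, x - xs⟫ ≥ -ρ * ‖F x‖ ^ 2)
    (γ₁ γ₂ : ℝ) (hγ₁u : γ₁ ≤ 1 / L)
    (hγ₂l : 0 < γ₂) (hγ₂u : γ₂ < γ₁ - 2 * ρ)
    (x xt : ℕ → EuclideanSpace ℝ (Fin d))
    (hxt : ∀ k : ℕ, xt k = x k - γ₁ • F (x k))
    (hx : ∀ k : ℕ, x (k + 1) = x k - γ₂ • F (xt k)) :
    ∀ N : ℕ,
      (1 / ((N : ℝ) + 1)) * ∑ k ∈ Finset.range (N + 1), ‖F (xt k)‖ ^ 2 ≤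
        ‖x 0 - xs‖ ^ 2 / (γ₂ * (γ₁ - 2 * ρ - γ₂) * ((N : ℝ) + 1)) := by
  intro N
  have hγ₁ : 0 ≤ γ₁ := by linarith
  have hγ₁L : γ₁ * L ≤ 1 := (le_div_iff₀ hL).mp hγ₁u
  have hc : 0 < γ₂ * (γ₁ - 2 * ρ - γ₂) := mul_pos hγ₂l (by linarith)
  have hdescent : ∀ k, γ₂ * (γ₁ - 2 * ρ - γ₂) * ‖F (xt k)‖ ^ 2 ≤
      ‖x k - xs‖ ^ 2 - ‖x (k + 1) - xs‖ ^ 2 := fun k => by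
    rw [hx, hxt]
    exact norm_extragradient_step_sub_sq_le hLip hstar hγ₁ hγ₁L hγ₂l.le (x k)
  have hsum := sum_range_le_of_le_sub_succ hdescent (N + 1) (sq_nonneg _)
  rw [← mul_sum] at hsum
  rw [one_div, inv_mul_eq_div, mul_comm _ ((N : ℝ) + 1), ← div_div, div_right_comm,
    div_le_div_iff_of_pos_right (by positivity), le_div_iff₀ hc, mul_comm]
  exact hsum

/-- Best-iterate `O(1/N)` rate for Extragradient in terms of `‖F(x̃^k)‖²` under
`L`-Lipschitzness and `ρ`-star-negative comonotonicity, with `2ρ < γ₁ ≤ 1/L` and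
`0 < γ₂ < γ₁ − 2ρ`:
`(1/(N+1)) ∑_{k=0}^N ‖F(x̃^k)‖² ≤ ‖x⁰ − x*‖²/(γ₂(γ₁ − 2ρ − γ₂)(N+1))`. -/
theorem stmt_10 {d : ℕ} (ρ L : ℝ) (hρ : 0 ≤ ρ) (hL : 0 < L)
    (F : EuclideanSpace ℝ (Fin d) → EuclideanSpace ℝ (Fin d))
    (hLip : ∀ x y, ‖F x - F y‖ ≤ L * ‖x - y‖)
    (xs : EuclideanSpace ℝ (Fin d)) (hxs : F xs = 0)
    (hstar : ∀ x, ⟪F x, x - xs⟫ ≥ -ρ * ‖F x‖ ^ 2)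
    (γ₁ γ₂ : ℝ) (hγ₁l : 2 * ρ < γ₁) (hγ₁u : γ₁ ≤ 1 / L)
    (hγ₂l : 0 < γ₂) (hγ₂u : γ₂ < γ₁ - 2 * ρ)
    (x xt : ℕ → EuclideanSpace ℝ (Fin d))
    (hxt : ∀ k : ℕ, xt k = x k - γ₁ • F (x k))
    (hx : ∀ k : ℕ, x (k + 1) = x k - γ₂ • F (xt k)) :
    ∀ N : ℕ,
      (1 / ((N : ℝ) + 1)) * ∑ k ∈ Finset.range (N + 1), ‖F (xt k)‖ ^ 2 ≤
        ‖x 0 - xs‖ ^ 2 / (γ₂ * (γ₁ - 2 * ρ - γ₂) * ((N : ℝ) + 1)) :=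
  stmt_10_general ρ L hρ hL F hLip xs hstar γ₁ γ₂ hγ₁u hγ₂l hγ₂u x xt hxt hx
end

section
/- Let L > 0, 0 < γ₁ ≤ 1/L, γ₂ > 0. Let A be the 2×2 rotation matrix by angle 2π/3, i.e. with first row (−1/2, −√3/2) and second row (√3/2, −1/2), and define F : ℝ² → ℝ² by F(x) = L·A·x. Then: (i) F is L-Lipschitz; (ii) F is (1/(2L))-negatively comonotone (indeed ⟨F(x) − F(y), x − y⟩ = −(1/(2L))‖F(x) − F(y)‖²); and (iii) the Extragradient iterates with stepsizes γ₁, γ₂ satisfy ‖x^{k+1}‖² = ((1 + (γ₂L/2)(1 − γ₁L))² + (3/4)γ₂²L²(1 + γ₁L)²)‖x^k‖² > ‖x^k‖² whenever x^k ≠ 0; so EG diverges from the unique solution x* = 0 for any x⁰ ≠ 0. -/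
/-!
Identifying `ℝ²` with `ℂ`, the operator `F` is multiplication by `c = L·e^{2πi/3}`. Hence
`⟪F x, x⟫ = Re c · ‖x‖² = -(L/2)‖x‖²` while `‖F x‖ = L‖x‖`, and one Extragradient step is
multiplication by `1 - γ₂c(1 - γ₁c)`, whose squared modulus is the stated factor; it exceeds `1`
because `γ₁L ≤ 1`.
-/

open RealInnerProductSpace

namespace EuclideanSpace

noncomputable def complexMul (w : ℂ) (x : EuclideanSpace ℝ (Fin 2)) :
    EuclideanSpace ℝ (Fin 2) :=
  !₂[w.re * x 0 - w.im * x 1, w.im * x 0 + w.re * x 1]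

variable (w v : ℂ) (x y : EuclideanSpace ℝ (Fin 2))

@[simp] lemma complexMul_apply_zero : complexMul w x 0 = w.re * x 0 - w.im * x 1 := rfl

@[simp] lemma complexMul_apply_one : complexMul w x 1 = w.im * x 0 + w.re * x 1 := rfl

lemma complexMul_sub : complexMul w x - complexMul w y = complexMul w (x - y) := by
  ext i; fin_cases i <;> simp only [Fin.zero_eta, Fin.mk_one, PiLp.sub_apply,
    complexMul_apply_zero, complexMul_apply_one] <;> ring

lemma complexMul_complexMul : complexMul w (complexMul v x) = complexMul (w * v) x := by
  ext i; fin_cases i <;> simp only [Fin.zero_eta, Fin.mk_one, complexMul_apply_zero,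
    complexMul_apply_one, Complex.mul_re, Complex.mul_im] <;> ring

lemma sub_smul_complexMul (γ : ℝ) : x - γ • complexMul w x = complexMul (1 - γ * w) x := by
  ext i; fin_cases i <;> simp only [Fin.zero_eta, Fin.mk_one, PiLp.sub_apply, PiLp.smul_apply,
    smul_eq_mul, complexMul_apply_zero, complexMul_apply_one, Complex.sub_re, Complex.sub_im,
    Complex.one_re, Complex.one_im, Complex.re_ofReal_mul, Complex.im_ofReal_mul] <;> ring

lemma sub_smul_complexMul_sub_smul (γ₁ γ₂ : ℝ) :
    x - γ₂ • complexMul w (x - γ₁ • complexMul w x) =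
      complexMul (1 - γ₂ * (w * (1 - γ₁ * w))) x := by
  rw [sub_smul_complexMul, complexMul_complexMul, sub_smul_complexMul]

lemma norm_sq_complexMul : ‖complexMul w x‖ ^ 2 = Complex.normSq w * ‖x‖ ^ 2 := by
  simp only [real_norm_sq_eq, Fin.sum_univ_two, complexMul_apply_zero, complexMul_apply_one,
    Complex.normSq_apply]
  ring

lemma norm_complexMul : ‖complexMul w x‖ = ‖w‖ * ‖x‖ := by
  rw [← sq_eq_sq₀ (norm_nonneg _) (by positivity), mul_pow, Complex.sq_norm, norm_sq_complexMul]

lemma inner_complexMul_self : ⟪complexMul w x, x⟫ = w.re * ‖x‖ ^ 2 := by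
  simp only [real_norm_sq_eq, PiLp.inner_apply, Fin.sum_univ_two, RCLike.inner_apply,
    conj_trivial, complexMul_apply_zero, complexMul_apply_one]
  ring

end EuclideanSpace

open EuclideanSpace

/-- `L · e^{2πi/3}`. -/
noncomputable def scaledCubeRoot (L : ℝ) : ℂ := ⟨-(L / 2), L * (√3 / 2)⟩

lemma normSq_scaledCubeRoot (L : ℝ) : Complex.normSq (scaledCubeRoot L) = L ^ 2 := by
  have h3 : √3 ^ 2 = 3 := Real.sq_sqrt (by norm_num)
  simp only [scaledCubeRoot, Complex.normSq_mk]
  linear_combination L ^ 2 / 4 * h3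

lemma normSq_one_sub_mul_scaledCubeRoot (L γ₁ γ₂ : ℝ) :
    Complex.normSq (1 - γ₂ * (scaledCubeRoot L * (1 - γ₁ * scaledCubeRoot L))) =
      (1 + (γ₂ * L / 2) * (1 - γ₁ * L)) ^ 2 +
        (3 / 4) * γ₂ ^ 2 * L ^ 2 * (1 + γ₁ * L) ^ 2 := by
  have h3 : √3 ^ 2 = 3 := Real.sq_sqrt (by norm_num)
  have h9 : √3 ^ 4 = 9 := by rw [show 4 = 2 * 2 by rfl, pow_mul, h3]; norm_num
  simp only [scaledCubeRoot, Complex.normSq_apply, Complex.sub_re, Complex.sub_im,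
    Complex.one_re, Complex.one_im, Complex.mul_re, Complex.mul_im, Complex.ofReal_re,
    Complex.ofReal_im]
  ring_nf
  rw [h3, h9]
  ring

lemma one_lt_extragradient_factor {L γ₁ γ₂ : ℝ} (hL : 0 < L) (hγ₁ : 0 < γ₁)
    (hγ₁L : γ₁ * L ≤ 1) (hγ₂ : 0 < γ₂) :
    1 < (1 + (γ₂ * L / 2) * (1 - γ₁ * L)) ^ 2 +
      (3 / 4) * γ₂ ^ 2 * L ^ 2 * (1 + γ₁ * L) ^ 2 := by
  have hreal : 0 ≤ γ₂ * L / 2 * (1 - γ₁ * L) := by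
    have : 0 < γ₂ * L := mul_pos hγ₂ hL
    nlinarith
  have himag : 0 < (3 / 4) * γ₂ ^ 2 * L ^ 2 * (1 + γ₁ * L) ^ 2 := by
    have : 0 < 1 + γ₁ * L := by nlinarith [mul_pos hγ₁ hL]
    positivity
  nlinarith

/-- Counter-example for Extragradient with `0 < γ₁ ≤ 1/L`: for
`F(x) = L·A·x` with `A` the rotation by `2π/3`, (i) `F` is `L`-Lipschitz;
(ii) `F` is `1/(2L)`-negatively comonotone with equality; and (iii) the EG
iterates satisfy
`‖x^{k+1}‖² = ((1 + (γ₂L/2)(1−γ₁L))² + (3/4)γ₂²L²(1+γ₁L)²)‖x^k‖² > ‖x^k‖²`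
whenever `x^k ≠ 0`, so EG diverges from the unique solution `x* = 0`. -/
theorem stmt_15 (L γ₁ γ₂ : ℝ) (hL : 0 < L)
    (hγ₁l : 0 < γ₁) (hγ₁u : γ₁ ≤ 1 / L) (hγ₂ : 0 < γ₂)
    (F : EuclideanSpace ℝ (Fin 2) → EuclideanSpace ℝ (Fin 2))
    (hF : ∀ x : EuclideanSpace ℝ (Fin 2),
      F x 0 = L * (-(1 / 2) * x 0 - (Real.sqrt 3 / 2) * x 1) ∧
      F x 1 = L * ((Real.sqrt 3 / 2) * x 0 - (1 / 2) * x 1)) :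
    (∀ x y, ‖F x - F y‖ ≤ L * ‖x - y‖) ∧
    (∀ x y, ⟪F x - F y, x - y⟫ = -(1 / (2 * L)) * ‖F x - F y‖ ^ 2) ∧
    (∀ x xt : ℕ → EuclideanSpace ℝ (Fin 2),
      (∀ k : ℕ, xt k = x k - γ₁ • F (x k)) →
      (∀ k : ℕ, x (k + 1) = x k - γ₂ • F (xt k)) →
      ∀ k : ℕ,
        ‖x (k + 1)‖ ^ 2 =
          ((1 + (γ₂ * L / 2) * (1 - γ₁ * L)) ^ 2 +
            (3 / 4) * γ₂ ^ 2 * L ^ 2 * (1 + γ₁ * L) ^ 2) * ‖x k‖ ^ 2 ∧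
        (x k ≠ 0 → ‖x (k + 1)‖ ^ 2 > ‖x k‖ ^ 2)) := by
  have hFc : F = complexMul (scaledCubeRoot L) := by
    funext x; ext i; fin_cases i
    · simp only [Fin.zero_eta, (hF x).1, complexMul_apply_zero, scaledCubeRoot]; ring
    · simp only [Fin.mk_one, (hF x).2, complexMul_apply_one, scaledCubeRoot]; ring
  have hc : ‖scaledCubeRoot L‖ = L := by
    rw [← sq_eq_sq₀ (norm_nonneg _) hL.le, Complex.sq_norm, normSq_scaledCubeRoot]
  subst hFc
  refine ⟨fun x y => ?_, fun x y => ?_, fun x xt hxt hx k => ?_⟩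
  · rw [complexMul_sub, norm_complexMul, hc]
  · rw [complexMul_sub, inner_complexMul_self, norm_sq_complexMul, normSq_scaledCubeRoot]
    simp only [scaledCubeRoot]
    field_simp
  · have hstep : ‖x (k + 1)‖ ^ 2 = ((1 + (γ₂ * L / 2) * (1 - γ₁ * L)) ^ 2 +
        (3 / 4) * γ₂ ^ 2 * L ^ 2 * (1 + γ₁ * L) ^ 2) * ‖x k‖ ^ 2 := by
      rw [hx, hxt, sub_smul_complexMul_sub_smul, norm_sq_complexMul,
        normSq_one_sub_mul_scaledCubeRoot]
    have hγ₁L : γ₁ * L ≤ 1 := by rwa [le_div_iff₀ hL] at hγ₁u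
    refine ⟨hstep, fun hne => ?_⟩
    rw [hstep]
    exact lt_mul_left (by positivity) (one_lt_extragradient_factor hL hγ₁l hγ₁L hγ₂)
end
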